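/- For n ≥ 3 and k ∈ [1, n-1], χ_k^{(n)} = θ_k^{(n)}: the number of Temperley–Lieb diagrams on n points with exactly k left-exposed arcs equals the number of positive indexing matrices whose (1,1)-entry is k. -/

import Mathlib

open Finset

/-- `l` encodes a (non-degenerate) indexing matrix on `n` points: the columns,
listed left to right, as pairs `(top entry, bottom entry)`.  Entries lie in
`[0, n-1]`, the first row is strictly increasing, the second row is weakly
increasing, repeated second-row entries are `0`, and each top entry is at
least the corresponding bottom entry. -/
def IsIndexingMatrix (n : ℕ) (l : List (ℕ × ℕ)) : Prop :=
  1 ≤ l.length ∧ l.length ≤ n ∧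
  (∀ p ∈ l, p.1 < n ∧ p.2 ≤ p.1) ∧
  l.Pairwise (fun p q => p.1 < q.1 ∧ p.2 ≤ q.2 ∧ (p.2 = q.2 → p.2 = 0))

/-- A positive indexing matrix: all entries are positive. -/
def IsPositiveIndexingMatrix (n : ℕ) (l : List (ℕ × ℕ)) : Prop :=
  IsIndexingMatrix n l ∧ ∀ p ∈ l, 0 < p.1 ∧ 0 < p.2

/-- `θ_k^{(n)}`: the number of positive indexing matrices whose `(1,1)` entry
equals `k`. -/
noncomputable def theta (n k : ℕ) : ℕ :=
  Nat.card {l : List (ℕ × ℕ) //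
    IsPositiveIndexingMatrix n l ∧ l.head?.map Prod.fst = some k}

/-- The blob-rank of an indexing matrix: the number of its columns containing
a `0`. -/
def blobRank (l : List (ℕ × ℕ)) : ℕ := l.countP (fun p => p.1 == 0 || p.2 == 0)

/-- `Ω_r^{(n)}`: the number of indexing matrices on `n` points of blob-rank `r`,
the degenerate indexing matrix being counted in `Ω_0^{(n)}`. -/
noncomputable def Omega (n r : ℕ) : ℕ :=
  Nat.card {l : List (ℕ × ℕ) // IsIndexingMatrix n l ∧ blobRank l = r} +
    (if r = 0 then 1 else 0)

/-- `χ_k^{(n)} = Σ_{i₁+⋯+i_k = n-k} C_{i₁} ⋯ C_{i_k}` (Catalan numbers). -/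
def chi (n k : ℕ) : ℕ :=
  ∑ t ∈ Finset.Nat.antidiagonalTuple k (n - k), ∏ j, catalan (t j)

/-- A Temperley–Lieb diagram on `n` points: a non-crossing perfect matching of
`2n` boundary points numbered clockwise, given by a fixed-point free
involution. -/
structure TLDiagram (n : ℕ) where
  f : Fin (2 * n) → Fin (2 * n)
  involutive : ∀ x, f (f x) = x
  noFixedPoint : ∀ x, f x ≠ x
  noncrossing : ∀ a b : Fin (2 * n), a < b → b < f a → f a < f b → False

/-- `a` is the left (smaller) endpoint of an arc of `D`. -/
def TLDiagram.IsArc {n : ℕ} (D : TLDiagram n) (a : Fin (2 * n)) : Prop :=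
  a < D.f a

/-- The arc with left endpoint `a` is exposed to the left side of the diagram,
i.e. it is not nested inside any other arc. -/
def TLDiagram.IsExposed {n : ℕ} (D : TLDiagram n) (a : Fin (2 * n)) : Prop :=
  a < D.f a ∧ ∀ c, ¬ (c < a ∧ D.f a < D.f c)

/-- The number of arcs of `D` exposed to the left side. -/
noncomputable def exposedCount {n : ℕ} (D : TLDiagram n) : ℕ :=
  Nat.card {a : Fin (2 * n) // D.IsExposed a}

/-- A `d`-abacus blob diagram on `n` points: a TL-diagram together with blobs
on some arcs exposed to the left, one bead count in `ℤ/dℤ` on every arc, and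
an extra bead count on every blobbed arc (its second component). -/
structure AbacusBlobDiagram (d n : ℕ) where
  base : TLDiagram n
  blob : Fin (2 * n) → Bool
  blob_exposed : ∀ a, blob a = true → base.IsExposed a
  beads₁ : Fin (2 * n) → ZMod d
  beads₂ : Fin (2 * n) → ZMod d
  beads₁_arc : ∀ a, ¬ base.IsArc a → beads₁ a = 0
  beads₂_blob : ∀ a, blob a = false → beads₂ a = 0

/-- A `d`-abacus hook diagram on `n` points: a blobbed TL-diagram in which all
blobbed arcs are merged into the single hook component through `0, 0'`, with a
bead count in `ℤ/dℤ` on every unblobbed arc and one on the hook component. -/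
structure AbacusHookDiagram (d n : ℕ) where
  base : TLDiagram n
  blob : Fin (2 * n) → Bool
  blob_exposed : ∀ a, blob a = true → base.IsExposed a
  beads : Fin (2 * n) → ZMod d
  beads_arc : ∀ a, ¬ base.IsArc a ∨ blob a = true → beads a = 0
  hookBeads : ZMod d

/-!
With all entries positive, the condition on repeated second-row entries forces the second row
to be strictly increasing as well, so a positive indexing matrix is a nonempty chain of pairs
`(a, b)` with `1 ≤ b ≤ a ≤ N := n - 1`, strictly increasing in both coordinates. Peeling off
the first column, the number `T(x, y)` of such chains above `(x, y)` satisfies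
`T(x, y) = 1 + ∑_{x < a ≤ N} ∑_{y < b ≤ a} T(a, b)`, and so does `[X^(N-x)] C^(x-y+2)` for
the Catalan series `C`: the functional equation `C = 1 + X C²` gives the Pascal-type rule
`[X^(m+1)] C^(k+1) = [X^(m+1)] C^k + [X^m] C^(k+2)`, which telescopes in both arguments.
Summing over the second entry of the first column gives `θ_k = [X^(n-k)] C^k`, and `χ_k` is
this coefficient expanded as a convolution.
-/

namespace PowerSeries

theorem coeff_pow_eq_sum_antidiagonalTuple {R : Type*} [CommSemiring R]
    (φ : R⟦X⟧) (k m : ℕ) :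
    coeff m (φ ^ k) = ∑ t ∈ Finset.Nat.antidiagonalTuple k m, ∏ j, coeff (t j) φ := by
  classical
  rw [← Fin.prod_const, coeff_prod, finsuppAntidiag, sum_map,
    ← piAntidiag_univ_fin_eq_antidiagonalTuple]
  exact sum_attach (piAntidiag univ m) fun t => ∏ j, coeff (t j) φ

theorem coeff_succ_catalanSeries_pow_succ (k m : ℕ) :
    coeff (m + 1) (catalanSeries ^ (k + 1)) =
      coeff (m + 1) (catalanSeries ^ k) + coeff m (catalanSeries ^ (k + 2)) := by
  have h : catalanSeries ^ (k + 1) = catalanSeries ^ k + catalanSeries ^ (k + 2) * X := calc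
    catalanSeries ^ (k + 1) = catalanSeries ^ k * catalanSeries := pow_succ _ _
    _ = catalanSeries ^ k * (catalanSeries ^ 2 * X + 1) := by rw [catalanSeries_sq_mul_X_add_one]
    _ = _ := by ring
  rw [h, map_add, coeff_succ_mul_X]

theorem coeff_succ_catalanSeries_pow_eq_sum_range (k m : ℕ) :
    coeff (m + 1) (catalanSeries ^ k) = ∑ i ∈ range k, coeff m (catalanSeries ^ (i + 2)) := by
  induction k with
  | zero => simp [coeff_one]
  | succ k ih => rw [coeff_succ_catalanSeries_pow_succ, ih, sum_range_succ]

theorem sum_Ioc_coeff_catalanSeries_pow (y a m : ℕ) :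
    ∑ b ∈ Ioc y a, coeff m (catalanSeries ^ (a - b + 2)) =
      coeff (m + 1) (catalanSeries ^ (a - y)) := by
  rw [coeff_succ_catalanSeries_pow_eq_sum_range]
  refine sum_nbij' (a - ·) (a - ·) ?_ ?_ ?_ ?_ ?_ <;> intro b hb <;> simp_all <;> omega

theorem coeff_catalanSeries_pow_eq_one_add_sum_Ioc {x y : ℕ} (N : ℕ) (hyx : y ≤ x) :
    coeff (N - x) (catalanSeries ^ (x - y + 2)) =
      1 + ∑ a ∈ Ioc x N, coeff (N - a + 1) (catalanSeries ^ (a - y)) := by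
  obtain hNx | hxN := le_or_gt N x
  · simp [Nat.sub_eq_zero_of_le hNx, Ioc_eq_empty_of_le hNx]
  rw [← insert_Ioc_add_one_left_eq_Ioc hxN, sum_insert (by simp), ← add_assoc, add_comm 1,
    add_assoc, ← coeff_catalanSeries_pow_eq_one_add_sum_Ioc N (by omega : y ≤ x + 1),
    show N - x = N - (x + 1) + 1 by omega, show x - y + 2 = (x - y + 1) + 1 by omega,
    coeff_succ_catalanSeries_pow_succ, show x + 1 - y = x - y + 1 by omega]
termination_by N - x

end PowerSeries

open PowerSeries

def StrictlyBelow (p q : ℕ × ℕ) : Prop := p.1 < q.1 ∧ p.2 < q.2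

instance : IsTrans (ℕ × ℕ) StrictlyBelow :=
  ⟨fun _ _ _ h h' => ⟨h.1.trans h'.1, h.2.trans h'.2⟩⟩

def chainsAbove (N x y : ℕ) : Finset (List (ℕ × ℕ)) :=
  insert [] (((Ioc x N).sigma fun a => Ioc y a).attach.biUnion fun p =>
    (chainsAbove N p.1.1 p.1.2).map ⟨List.cons (p.1.1, p.1.2), List.cons_injective⟩)
termination_by N - x
decreasing_by have := p.2; simp only [mem_sigma, mem_Ioc] at this; omega

theorem nil_mem_chainsAbove (N x y : ℕ) : [] ∈ chainsAbove N x y := by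
  rw [chainsAbove]; exact mem_insert_self _ _

theorem cons_mem_chainsAbove {N x y : ℕ} {p : ℕ × ℕ} {l : List (ℕ × ℕ)} :
    p :: l ∈ chainsAbove N x y ↔
      x < p.1 ∧ p.1 ≤ N ∧ y < p.2 ∧ p.2 ≤ p.1 ∧ l ∈ chainsAbove N p.1 p.2 := by
  obtain ⟨a, b⟩ := p
  rw [chainsAbove]
  simp [and_assoc]
  tauto

theorem mem_chainsAbove_iff {N x y : ℕ} {l : List (ℕ × ℕ)} :
    l ∈ chainsAbove N x y ↔
      ((x, y) :: l).IsChain StrictlyBelow ∧ ∀ p ∈ l, p.1 ≤ N ∧ p.2 ≤ p.1 := by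
  induction l generalizing x y with
  | nil => simp [nil_mem_chainsAbove]
  | cons p l ih =>
    rw [cons_mem_chainsAbove, ih, List.isChain_cons_cons, List.forall_mem_cons, StrictlyBelow]
    tauto

theorem length_le_of_mem_chainsAbove {N x y : ℕ} {l : List (ℕ × ℕ)}
    (h : l ∈ chainsAbove N x y) : l.length ≤ N - x := by
  induction l generalizing x y with
  | nil => simp
  | cons p l ih =>
    obtain ⟨hxp, hpN, -, -, hl⟩ := cons_mem_chainsAbove.1 h
    have := ih hl
    rw [List.length_cons]
    omega

theorem card_chainsAbove_eq (N x y : ℕ) :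
    #(chainsAbove N x y) = 1 + ∑ a ∈ Ioc x N, ∑ b ∈ Ioc y a, #(chainsAbove N a b) := by
  rw [chainsAbove, card_insert_of_notMem (by simp), card_biUnion, add_comm]
  · simp only [card_map]
    rw [sum_attach _ fun p : (_ : ℕ) × ℕ => #(chainsAbove N p.1 p.2), sum_sigma]
  · rintro ⟨⟨a, b⟩, _⟩ - ⟨⟨a', b'⟩, _⟩ - hne
    simp only [disjoint_left, mem_map]
    rintro _ ⟨l, -, rfl⟩ ⟨l', -, h⟩
    simp_all

theorem card_chainsAbove (N : ℕ) {x y : ℕ} (hyx : y ≤ x) :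
    #(chainsAbove N x y) = coeff (N - x) (catalanSeries ^ (x - y + 2)) := by
  rw [card_chainsAbove_eq, coeff_catalanSeries_pow_eq_one_add_sum_Ioc N hyx]
  refine congrArg (1 + ·) (sum_congr rfl fun a ha => ?_)
  have := mem_Ioc.1 ha
  rw [← sum_Ioc_coeff_catalanSeries_pow]
  exact sum_congr rfl fun b hb => card_chainsAbove N (mem_Ioc.1 hb).2
termination_by N - x

theorem isPositiveIndexingMatrix_iff {n : ℕ} {l : List (ℕ × ℕ)} :
    IsPositiveIndexingMatrix n l ↔ l ≠ [] ∧ l ∈ chainsAbove (n - 1) 0 0 := by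
  simp only [IsPositiveIndexingMatrix, IsIndexingMatrix]
  constructor
  · rintro ⟨⟨hlen, -, hbound, hpw⟩, hpos⟩
    refine ⟨List.ne_nil_of_length_pos hlen, mem_chainsAbove_iff.2 ⟨List.isChain_iff_pairwise.2
      (List.pairwise_cons.2 ⟨hpos, hpw.imp_of_mem ?_⟩),
      fun p hp => ⟨Nat.le_sub_one_of_lt (hbound p hp).1, (hbound p hp).2⟩⟩⟩
    rintro p q hp - ⟨h1, h2, h3⟩
    exact ⟨h1, h2.lt_of_ne fun h => (hpos p hp).2.ne' (h3 h)⟩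
  · rintro ⟨hne, hl⟩
    have hlen := length_le_of_mem_chainsAbove hl
    obtain ⟨hchain, hbound⟩ := mem_chainsAbove_iff.1 hl
    obtain ⟨hpos, hpw⟩ := List.pairwise_cons.1 (List.isChain_iff_pairwise.1 hchain)
    refine ⟨⟨List.length_pos_of_ne_nil hne, by omega, fun p hp => ⟨?_, (hbound p hp).2⟩,
      hpw.imp fun h => ⟨h.1, h.2.le, fun e => absurd e h.2.ne⟩⟩, hpos⟩
    have := (hbound p hp).1
    have := (hpos p hp).1
    omega

theorem theta_eq_sum_card_chainsAbove {n k : ℕ} (hk : k < n) :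
    theta n k = ∑ b ∈ Ioc 0 k, #(chainsAbove (n - 1) k b) := by
  let G := ((Ioc 0 k).sigma fun b => chainsAbove (n - 1) k b).image fun q => (k, q.1) :: q.2
  have hG (l : List (ℕ × ℕ)) :
      IsPositiveIndexingMatrix n l ∧ l.head?.map Prod.fst = some k ↔ l ∈ G := by
    rcases l with _ | ⟨⟨a, b⟩, t⟩
    · simp [G]
    · rw [isPositiveIndexingMatrix_iff, cons_mem_chainsAbove]
      simp only [ne_eq, reduceCtorEq, not_false_eq_true, true_and, List.head?_cons,
        Option.map_some, Option.some.injEq, mem_image, mem_sigma, mem_Ioc, List.cons.injEq,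
        Prod.mk.injEq, Sigma.exists, exists_eq_right_right, G]
      constructor
      · rintro ⟨⟨-, -, hb, hba, ht⟩, rfl⟩
        exact ⟨⟨⟨hb, hba⟩, ht⟩, rfl⟩
      · rintro ⟨⟨⟨hb, hbk⟩, ht⟩, rfl⟩
        exact ⟨⟨by omega, by omega, hb, hbk, ht⟩, rfl⟩
  rw [theta, Nat.card_congr (Equiv.subtypeEquivRight hG), Nat.card_eq_finsetCard,
    card_image_of_injective _ (by rintro ⟨b, t⟩ ⟨b', t'⟩ h; simp_all), card_sigma]

theorem chi_eq_coeff_catalanSeries_pow (n k : ℕ) :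
    chi n k = coeff (n - k) (catalanSeries ^ k) := by
  simp [chi, coeff_pow_eq_sum_antidiagonalTuple]

theorem stmt13_general (n k : ℕ) (h1 : 1 ≤ k) (h2 : k ≤ n - 1) :
    chi n k = theta n k := by
  rw [chi_eq_coeff_catalanSeries_pow, theta_eq_sum_card_chainsAbove (by omega),
    sum_congr rfl fun b hb => card_chainsAbove (n - 1) (mem_Ioc.1 hb).2,
    sum_Ioc_coeff_catalanSeries_pow, Nat.sub_zero, show n - 1 - k + 1 = n - k by omega]

/-- for `n ≥ 3` and `k ∈ [1, n-1]`, `χ_k^{(n)} = θ_k^{(n)}`. -/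
theorem stmt13 (n k : ℕ) (hn : 3 ≤ n) (h1 : 1 ≤ k) (h2 : k ≤ n - 1) :
    chi n k = theta n k :=
  stmt13_general n k h1 h2
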